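/- arXiv:1612.05660 — 2 statements merged into one kernel-verified Lean document; each statement's English description precedes it below -/
import Mathlib

section
/- Let J_C be a neural ideal. If the canonical form CF(J_C) is a Gröbner basis of J_C with respect to some monomial ordering, then CF(J_C) is a Gröbner basis of J_C with respect to every monomial ordering (i.e., it is a universal Gröbner basis). -/
/-!
The pseudo-monomial `x_σ ∏_{j ∈ τ} (1 + x_j)` has leading monomial `x_σ x_τ` for every monomial
order, so the leading monomials of `CF(J_C)` do not depend on the order. If they generate the
initial ideal for one order, no nonzero element of `J_C` is supported on the monomials none of them
divides. Dividing an element of `J_C` by `CF(J_C)` with respect to any other order therefore leaves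
the remainder `0`, and the degree bounds of the division show that its leading monomial is
divisible by the leading monomial of some element of `CF(J_C)`.
-/

open MvPolynomial

universe u

/-- The pseudo-monomial `x_σ * ∏_{j ∈ τ} (1 + x_j)` in `F₂[x₁,…,xₙ]`. -/
noncomputable def psm {n : ℕ} (σ τ : Finset (Fin n)) : MvPolynomial (Fin n) (ZMod 2) :=
  (∏ i ∈ σ, X i) * ∏ j ∈ τ, (1 + X j)

/-- A polynomial is a pseudo-monomial if it equals `psm σ τ` for disjoint `σ τ`. -/
def IsPseudoMonomial {n : ℕ} (f : MvPolynomial (Fin n) (ZMod 2)) : Prop :=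
  ∃ σ τ : Finset (Fin n), Disjoint σ τ ∧ f = psm σ τ

/-- The characteristic polynomial `ρ_v = ∏ i (1 - v_i - x_i)` of a point `v ∈ {0,1}ⁿ`. -/
noncomputable def rho {n : ℕ} (v : Fin n → ZMod 2) : MvPolynomial (Fin n) (ZMod 2) :=
  ∏ i, (1 - C (v i) - X i)

/-- The neural ideal `J_C` of a code `Co ⊆ {0,1}ⁿ`. -/
noncomputable def neuralIdeal {n : ℕ} (Co : Set (Fin n → ZMod 2)) :
    Ideal (MvPolynomial (Fin n) (ZMod 2)) :=
  Ideal.span {p | ∃ v, v ∉ Co ∧ p = rho v}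

/-- The canonical form: the set of minimal pseudo-monomials of an ideal. -/
def canonicalForm {n : ℕ} (J : Ideal (MvPolynomial (Fin n) (ZMod 2))) :
    Set (MvPolynomial (Fin n) (ZMod 2)) :=
  {f | IsPseudoMonomial f ∧ f ∈ J ∧
    ∀ g : MvPolynomial (Fin n) (ZMod 2), IsPseudoMonomial g → g ∈ J → g ∣ f → g = f}

/-- The multidegree (exponent of the leading term) of `f` w.r.t. a monomial order `m`. -/
noncomputable def leadDeg {n : ℕ} (m : MonomialOrder.{0,u} (Fin n))
    (f : MvPolynomial (Fin n) (ZMod 2)) : Fin n →₀ ℕ :=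
  m.toSyn.symm (f.support.sup (fun d => m.toSyn d))

/-- The exponent vector of the square-free monomial `x_ω`. -/
noncomputable def expOf {n : ℕ} (ω : Finset (Fin n)) : Fin n →₀ ℕ :=
  ∑ i ∈ ω, Finsupp.single i 1

/-- `G` is a Gröbner basis of `J` w.r.t. the monomial order `m`: a finite subset of `J`
whose leading terms generate the leading term ideal, i.e. the leading term of every nonzero
element of `J` is divisible by the leading term of some element of `G`. -/
def IsGB {n : ℕ} (m : MonomialOrder.{0,u} (Fin n)) (J : Ideal (MvPolynomial (Fin n) (ZMod 2)))
    (G : Set (MvPolynomial (Fin n) (ZMod 2))) : Prop :=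
  G.Finite ∧ G ⊆ (J : Set (MvPolynomial (Fin n) (ZMod 2))) ∧
    ∀ f ∈ J, f ≠ 0 → ∃ g ∈ G, g ≠ 0 ∧ leadDeg m g ≤ leadDeg m f

/-- A reduced Gröbner basis: every element has leading coefficient 1, and no term of any
element is divisible by the leading term of another element. -/
def IsReducedGB {n : ℕ} (m : MonomialOrder.{0,u} (Fin n))
    (J : Ideal (MvPolynomial (Fin n) (ZMod 2)))
    (G : Set (MvPolynomial (Fin n) (ZMod 2))) : Prop :=
  IsGB m J G ∧ (∀ g ∈ G, coeff (leadDeg m g) g = 1) ∧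
    ∀ f ∈ G, ∀ g ∈ G, g ≠ f → ∀ d ∈ f.support, ¬ leadDeg m g ≤ d

/-- The universal Gröbner basis: the union of all reduced Gröbner bases. -/
def universalGB {n : ℕ} (J : Ideal (MvPolynomial (Fin n) (ZMod 2))) :
    Set (MvPolynomial (Fin n) (ZMod 2)) :=
  {f | ∃ (m : MonomialOrder.{0,u} (Fin n)) (G : Set (MvPolynomial (Fin n) (ZMod 2))),
    IsReducedGB m J G ∧ f ∈ G}

/-- The receptive field code of a family of sets `U i` in a stimulus space `S`. -/
def rfCode {n : ℕ} {S : Type} (U : Fin n → Set S) : Set (Fin n → ZMod 2) :=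
  {c | ((⋂ i ∈ {i : Fin n | c i = 1}, U i) \ ⋃ j ∈ {j : Fin n | c j = 0}, U j).Nonempty}

namespace MonomialOrder

variable {σ R : Type*} [CommRing R] {B : Set (MvPolynomial σ R)} {I : Ideal (MvPolynomial σ R)}

theorem exists_degree_le_degree_of_mem_ideal (m : MonomialOrder σ)
    (hB : ∀ b ∈ B, IsUnit (m.leadingCoeff b)) (hBI : B ⊆ I)
    (hI : ∀ f ∈ I, f ≠ 0 → ∃ c ∈ f.support, ∃ b ∈ B, m.degree b ≤ c)
    {f : MvPolynomial σ R} (hf : f ∈ I) (hf0 : f ≠ 0) :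
    ∃ b ∈ B, m.degree b ≤ m.degree f := by
  classical
  obtain ⟨g, r, hfgr, hdeg, hr⟩ := m.div_set hB f
  rw [Finsupp.linearCombination_apply, Finsupp.sum] at hfgr
  have hr0 : r = 0 := by
    by_contra hr0
    have hrI : r ∈ I := by
      rw [eq_sub_of_add_eq' hfgr.symm]
      exact sub_mem hf (Ideal.sum_mem _ fun b _ => Ideal.mul_mem_left _ _ (hBI b.2))
    obtain ⟨c, hc, b, hb, hbc⟩ := hI r hrI hr0
    exact hr c hc b hb hbc
  rw [hr0, add_zero] at hfgr
  obtain ⟨b, -, hb⟩ : ∃ b ∈ g.support, m.degree f ∈ (g b • (b : MvPolynomial σ R)).support := by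
    have := m.degree_mem_support hf0
    rw [hfgr] at this ⊢
    exact Finset.mem_biUnion.mp (support_sum this)
  rw [smul_eq_mul, mul_comm] at hb
  have hgb : g b ≠ 0 := by rintro h; simp [h] at hb
  have hdeg_eq : m.degree ((b : MvPolynomial σ R) * g b) = m.degree f :=
    m.toSyn.injective (le_antisymm (hdeg b) (m.le_degree hb))
  refine ⟨b, b.2, ?_⟩
  rw [← hdeg_eq, m.degree_mul_of_isRegular_left (hB b b.2).isRegular hgb]
  exact le_self_add

theorem exists_degree_le_degree_of_degree_eq {m m' : MonomialOrder σ}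
    (hB : ∀ b ∈ B, IsUnit (m'.leadingCoeff b)) (hBdeg : ∀ b ∈ B, m.degree b = m'.degree b)
    (hBI : B ⊆ I) (hGB : ∀ f ∈ I, f ≠ 0 → ∃ b ∈ B, m.degree b ≤ m.degree f)
    {f : MvPolynomial σ R} (hf : f ∈ I) (hf0 : f ≠ 0) :
    ∃ b ∈ B, m'.degree b ≤ m'.degree f := by
  refine m'.exists_degree_le_degree_of_mem_ideal hB hBI (fun g hg hg0 => ?_) hf hf0
  obtain ⟨b, hb, hle⟩ := hGB g hg hg0
  exact ⟨m.degree g, m.degree_mem_support hg0, b, hb, hBdeg b hb ▸ hle⟩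

end MonomialOrder

section PseudoMonomial

variable {n : ℕ}

theorem leadDeg_eq_degree (m : MonomialOrder (Fin n)) (f : MvPolynomial (Fin n) (ZMod 2)) :
    leadDeg m f = m.degree f :=
  rfl

theorem degree_one_add_X (m : MonomialOrder (Fin n)) (j : Fin n) :
    m.degree (1 + X j : MvPolynomial (Fin n) (ZMod 2)) = Finsupp.single j 1 := by
  rw [add_comm, m.degree_add_of_lt, m.degree_X]
  rw [m.degree_one, m.degree_X, map_zero]
  exact (m.zero_le _).lt_of_ne' (by simp)

theorem one_add_X_ne_zero (j : Fin n) : (1 + X j : MvPolynomial (Fin n) (ZMod 2)) ≠ 0 :=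
  fun h => by simpa using congrArg (coeff 0) h

theorem psm_ne_zero (σ τ : Finset (Fin n)) : psm σ τ ≠ 0 :=
  mul_ne_zero (Finset.prod_ne_zero_iff.mpr fun i _ => X_ne_zero i)
    (Finset.prod_ne_zero_iff.mpr fun j _ => one_add_X_ne_zero j)

theorem degree_psm (m : MonomialOrder (Fin n)) (σ τ : Finset (Fin n)) :
    m.degree (psm σ τ) = expOf σ + expOf τ := by
  rw [psm, m.degree_mul' (psm_ne_zero σ τ), m.degree_prod fun i _ => X_ne_zero i,
    m.degree_prod fun j _ => one_add_X_ne_zero j]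
  simp only [m.degree_X, degree_one_add_X, expOf]

namespace IsPseudoMonomial

variable {f : MvPolynomial (Fin n) (ZMod 2)}

theorem ne_zero (hf : IsPseudoMonomial f) : f ≠ 0 := by
  obtain ⟨σ, τ, -, rfl⟩ := hf
  exact psm_ne_zero σ τ

theorem degree_eq (hf : IsPseudoMonomial f) (m m' : MonomialOrder (Fin n)) :
    m.degree f = m'.degree f := by
  obtain ⟨σ, τ, -, rfl⟩ := hf
  rw [degree_psm, degree_psm]

theorem isUnit_leadingCoeff (hf : IsPseudoMonomial f) (m : MonomialOrder (Fin n)) :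
    IsUnit (m.leadingCoeff f) :=
  isUnit_iff_ne_zero.mpr (m.leadingCoeff_ne_zero_iff.mpr hf.ne_zero)

end IsPseudoMonomial

end PseudoMonomial

/-- if the canonical form of a neural ideal is a Gröbner basis w.r.t. some
monomial ordering, then it is a Gröbner basis w.r.t. every monomial ordering. -/
theorem stmt9 {n : ℕ} (Co : Set (Fin n → ZMod 2)) (m : MonomialOrder.{0,u} (Fin n))
    (h : IsGB m (neuralIdeal Co) (canonicalForm (neuralIdeal Co))) :
    ∀ m' : MonomialOrder.{0,v} (Fin n),
      IsGB m' (neuralIdeal Co) (canonicalForm (neuralIdeal Co)) := by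
  intro m'
  simp only [IsGB, leadDeg_eq_degree] at h ⊢
  obtain ⟨hfin, hsub, hGB⟩ := h
  refine ⟨hfin, hsub, fun f hf hf0 => ?_⟩
  obtain ⟨g, hg, hle⟩ := MonomialOrder.exists_degree_le_degree_of_degree_eq
    (fun g hg => hg.1.isUnit_leadingCoeff m') (fun g hg => hg.1.degree_eq m m') hsub
    (fun f hf hf0 => (hGB f hf hf0).imp fun g ⟨hg, _, hle⟩ => ⟨hg, hle⟩) hf hf0
  exact ⟨g, hg, hg.1.ne_zero, hle⟩
end

section
/- Let U₁,…,Uₙ be sets in a stimulus space X with receptive field code C = C(𝒰), and σ₁, τ₁, σ₂, τ₂ ⊆ [n]. If x_{σ₁}∏_{i∈τ₁}(1+x_i) + x_{σ₂}∏_{j∈τ₂}(1+x_j) ∈ J_C, then U_{σ₁} ∩ ⋂_{i∈τ₁}U_iᶜ = U_{σ₂} ∩ ⋂_{j∈τ₂}U_jᶜ, where U_ω := ⋂_{i∈ω}U_i (with U_∅ = X) and U_iᶜ = X\U_i. -/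
/-!
Evaluating at the codeword `c(p)` of a point `p` turns a pseudo-monomial into the indicator of
its set `U_σ ∩ ⋂_{i∈τ} U_iᶜ` at `p`. Since `c(p) ∈ C` and every element of `J_C` vanishes on `C`
(each generator `ρ_v`, `v ∉ C`, vanishes off `v`), the two indicators sum to `0` in `𝔽₂`, so they
agree at every `p`.
-/

open MvPolynomial

universe u

open Classical in
noncomputable def codeword {n : ℕ} {S : Type} (U : Fin n → Set S) (p : S) : Fin n → ZMod 2 :=
  fun i => if p ∈ U i then 1 else 0

lemma codeword_mem_rfCode {n : ℕ} {S : Type} (U : Fin n → Set S) (p : S) :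
    codeword U p ∈ rfCode U := by
  refine ⟨p, Set.mem_iInter₂.mpr fun i hi => ?_, Set.mem_iUnion₂.not.mpr ?_⟩
  · by_contra hp
    simp [codeword, hp] at hi
  · rintro ⟨j, hj, hp⟩
    simp [codeword, hp] at hj

lemma eval_rho_of_ne {n : ℕ} {c v : Fin n → ZMod 2} (hcv : c ≠ v) : eval c (rho v) = 0 := by
  obtain ⟨i, hi⟩ := Function.ne_iff.mp hcv
  simp only [rho, map_prod, map_sub, map_one, eval_C, eval_X]
  exact Finset.prod_eq_zero (Finset.mem_univ i) <|
    (by decide : ∀ a b : ZMod 2, a ≠ b → 1 - b - a = 0) _ _ hi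

lemma eval_eq_zero_of_mem_neuralIdeal {n : ℕ} {Co : Set (Fin n → ZMod 2)} {c : Fin n → ZMod 2}
    (hc : c ∈ Co) {f : MvPolynomial (Fin n) (ZMod 2)} (hf : f ∈ neuralIdeal Co) :
    eval c f = 0 := by
  suffices neuralIdeal Co ≤ RingHom.ker (eval c) from this hf
  rw [neuralIdeal, Ideal.span_le]
  rintro _ ⟨v, hv, rfl⟩
  exact eval_rho_of_ne fun hcv => hv (hcv ▸ hc)

open Classical in
lemma one_add_codeword {n : ℕ} {S : Type} (U : Fin n → Set S) (p : S) (i : Fin n) :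
    1 + codeword U p i = if p ∈ (U i)ᶜ then 1 else 0 := by
  by_cases hp : p ∈ U i <;> simp [codeword, hp]
  decide

open Classical in
lemma eval_codeword_psm {n : ℕ} {S : Type} (U : Fin n → Set S) (p : S)
    (σ τ : Finset (Fin n)) :
    eval (codeword U p) (psm σ τ) =
      if p ∈ (⋂ i ∈ σ, U i) ∩ ⋂ i ∈ τ, (U i)ᶜ then 1 else 0 := by
  simp only [psm, map_mul, map_prod, map_add, map_one, eval_X, one_add_codeword]
  simp only [codeword, Finset.prod_boole, ite_zero_mul_ite_zero, mul_one, Set.mem_inter_iff,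
    Set.mem_iInter₂]

lemma ZMod.iff_of_ite_add_ite_eq_zero {P Q : Prop} [Decidable P] [Decidable Q]
    (h : (if P then 1 else 0 : ZMod 2) + (if Q then 1 else 0) = 0) : P ↔ Q := by
  by_cases hP : P <;> by_cases hQ : Q <;> simp_all

/-- if `x_{σ₁}∏_{i∈τ₁}(1+x_i) + x_{σ₂}∏_{j∈τ₂}(1+x_j) ∈ J_{C(𝒰)}`, then
`U_{σ₁} ∩ ⋂_{i∈τ₁} U_iᶜ = U_{σ₂} ∩ ⋂_{j∈τ₂} U_jᶜ`. -/
theorem stmt19 {n : ℕ} {S : Type} (U : Fin n → Set S) (σ₁ τ₁ σ₂ τ₂ : Finset (Fin n))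
    (h : psm σ₁ τ₁ + psm σ₂ τ₂ ∈ neuralIdeal (rfCode U)) :
    (⋂ i ∈ σ₁, U i) ∩ (⋂ i ∈ τ₁, (U i)ᶜ) =
    (⋂ i ∈ σ₂, U i) ∩ (⋂ i ∈ τ₂, (U i)ᶜ) := by
  classical
  ext p
  have hp := eval_eq_zero_of_mem_neuralIdeal (codeword_mem_rfCode U p) h
  rw [map_add, eval_codeword_psm, eval_codeword_psm] at hp
  exact ZMod.iff_of_ite_add_ite_eq_zero hp
end
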